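/- Let b > 0 be real, A ∈ ℂ, and set λ_± = ½(A ± √(A² − 4b)), where √ is the principal square root. Then Re λ_− ≤ ½ Re A. Moreover, if Re A ≥ 0 then Re λ_+ ≤ Re A, and if Re A < 0 then Re λ_+ < 0. -/

import Mathlib

/-- The principal square root on `ℂ`: the square root with nonnegative real part
(and nonnegative imaginary part when the real part is zero). -/
noncomputable def csqrt (z : ℂ) : ℂ := z ^ (1 / 2 : ℂ)

/-!
Write `s = √(A² − 4b)`, so that `s² = A² − 4b` and `Re s ≥ 0`. Comparing real and imaginary
parts of `s² = A² − c` gives the identity `(Re² s − Re² A)(Re² s + Im² A) = −c Re² s`, so for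
`c > 0` the real part of `s` is strictly smaller than that of `A` in absolute value, unless
both vanish. Since `Re λ± = (Re A ± Re s) / 2`, the three estimates follow.
-/

lemma csqrt_sq (z : ℂ) : csqrt z ^ 2 = z := by
  simp [csqrt]

lemma csqrt_re_nonneg (z : ℂ) : 0 ≤ (csqrt z).re := by
  rw [csqrt, one_div, Complex.cpow_inv_two_re]
  exact Real.sqrt_nonneg _

namespace Complex

variable {A s : ℂ} {c : ℝ}

lemma re_sq_sub_mul_re_sq_add_im_sq_of_sq_eq_sq_sub (hs : s ^ 2 = A ^ 2 - c) :
    (s.re ^ 2 - A.re ^ 2) * (s.re ^ 2 + A.im ^ 2) = -c * s.re ^ 2 := by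
  have hre : s.re ^ 2 - s.im ^ 2 = A.re ^ 2 - A.im ^ 2 - c := by
    simpa [sq] using congrArg re hs
  have him : s.re * s.im = A.re * A.im := by
    have := congrArg im hs
    simp only [sq, mul_im, sub_im, ofReal_im, sub_zero] at this
    linarith
  linear_combination s.re ^ 2 * hre + (s.re * s.im + A.re * A.im) * him

lemma abs_re_le_of_sq_eq_sq_sub (hc : 0 ≤ c) (hs : s ^ 2 = A ^ 2 - c) : |s.re| ≤ |A.re| := by
  have key := re_sq_sub_mul_re_sq_add_im_sq_of_sq_eq_sq_sub hs
  rcases eq_or_ne s.re 0 with h | h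
  · simp [h]
  · have hpos : 0 < s.re ^ 2 + A.im ^ 2 := by positivity
    apply sq_le_sq.mp
    nlinarith [mul_nonneg hc (sq_nonneg s.re)]

lemma abs_re_lt_of_sq_eq_sq_sub (hc : 0 < c) (hs : s ^ 2 = A ^ 2 - c) (hA : A.re ≠ 0) :
    |s.re| < |A.re| := by
  have key := re_sq_sub_mul_re_sq_add_im_sq_of_sq_eq_sq_sub hs
  rcases eq_or_ne s.re 0 with h | h
  · simpa [h] using hA
  · have hpos : 0 < s.re ^ 2 + A.im ^ 2 := by positivity
    apply sq_lt_sq.mp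
    nlinarith [mul_pos hc (by positivity : 0 < s.re ^ 2)]

end Complex

/-- For `b > 0` and `λ± = ½(A ± √(A² − 4b))`: `Re λ₋ ≤ ½ Re A`; if `Re A ≥ 0`
then `Re λ₊ ≤ Re A`; and if `Re A < 0` then `Re λ₊ < 0`. -/
theorem stmt15 (b : ℝ) (hb : 0 < b) (A : ℂ) :
    let lamPlus : ℂ := (A + csqrt (A ^ 2 - 4 * (b : ℂ))) / 2
    let lamMinus : ℂ := (A - csqrt (A ^ 2 - 4 * (b : ℂ))) / 2
    lamMinus.re ≤ A.re / 2 ∧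
    (0 ≤ A.re → lamPlus.re ≤ A.re) ∧
    (A.re < 0 → lamPlus.re < 0) := by
  intro lamPlus lamMinus
  set s := csqrt (A ^ 2 - 4 * (b : ℂ))
  have hs : s ^ 2 = A ^ 2 - ((4 * b : ℝ) : ℂ) := by push_cast; exact csqrt_sq _
  have hs_nonneg : 0 ≤ s.re := csqrt_re_nonneg _
  have h4b : 0 < 4 * b := by positivity
  have hle := Complex.abs_re_le_of_sq_eq_sq_sub h4b.le hs
  have hlt := Complex.abs_re_lt_of_sq_eq_sq_sub h4b hs
  rw [abs_of_nonneg hs_nonneg] at hle hlt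
  have hPlus : lamPlus.re = (A.re + s.re) / 2 := by simp [lamPlus, s]
  have hMinus : lamMinus.re = (A.re - s.re) / 2 := by simp [lamMinus, s]
  refine ⟨by rw [hMinus]; linarith, fun hA => ?_, fun hA => ?_⟩
  · rw [abs_of_nonneg hA] at hle
    rw [hPlus]
    linarith
  · have hlt' := hlt hA.ne
    rw [abs_of_neg hA] at hlt'
    rw [hPlus]
    linarith
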